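/- Let (G, ψ, p) be a generic Γ-labeled framework in ℝ², where Γ is free abelian of rank k ≥ 1, and V(G) = {u, v} has exactly two vertices with all edges directed from u to v. If k = 1 and there exist two edges from u to v with distinct labels, then (G, ψ, p) is L-periodically globally rigid for any nonsingular homomorphism L : Γ → ℝ²: for every q : V → ℝ² satisfying ‖q(u) − (q(v) + L(ψ(e)))‖ = ‖p(u) − (p(v) + L(ψ(e)))‖ for all edges e, one has ‖q(u) − (q(v) + L(γ))‖ = ‖p(u) − (p(v) + L(γ))‖ for all γ ∈ Γ. -/

import Mathlib

/-! With `Γ = ℤ` every translation is `L γ = γ • L 1`, so all labeled distances between the two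
orbits are the distances `‖(p u - p v) - t • L 1‖` for integer `t`. The squared distance
`‖x - t • w‖² = ‖x‖² - 2 t ⟪x, w⟫ + t² ‖w‖²` differs between two choices of `x` by an affine
function of `t`; two edges with distinct labels give two zeros of it, so it vanishes
identically. Distances within one orbit are `‖L γ‖` whatever the placement. -/

open scoped RealInnerProductSpace

section InnerProductSpace

variable {E : Type*} [NormedAddCommGroup E] [InnerProductSpace ℝ E]

theorem norm_sub_smul_sq (x w : E) (t : ℝ) :
    ‖x - t • w‖ ^ 2 = ‖x‖ ^ 2 - 2 * (t * ⟪x, w⟫) + t ^ 2 * ‖w‖ ^ 2 := by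
  rw [norm_sub_sq_real, real_inner_smul_right, norm_smul, Real.norm_eq_abs, mul_pow, sq_abs]

theorem norm_sub_smul_eq_of_eq_of_eq {x y w : E} {a b : ℝ} (hab : a ≠ b)
    (ha : ‖x - a • w‖ = ‖y - a • w‖) (hb : ‖x - b • w‖ = ‖y - b • w‖) (c : ℝ) :
    ‖x - c • w‖ = ‖y - c • w‖ := by
  rw [← sq_eq_sq₀ (norm_nonneg _) (norm_nonneg _)] at ha hb ⊢
  rw [norm_sub_smul_sq, norm_sub_smul_sq] at ha hb ⊢
  have hinner : ⟪x, w⟫ = ⟪y, w⟫ :=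
    mul_left_cancel₀ (sub_ne_zero.mpr hab) (by linarith)
  have hnorm : ‖x‖ ^ 2 = ‖y‖ ^ 2 := by rw [hinner] at ha; linarith
  rw [hinner, hnorm]

theorem norm_sub_map_eq_of_eq_of_eq (L : ℤ →+ E) {x y : E} {a b : ℤ} (hab : a ≠ b)
    (ha : ‖x - L a‖ = ‖y - L a‖) (hb : ‖x - L b‖ = ‖y - L b‖) (γ : ℤ) :
    ‖x - L γ‖ = ‖y - L γ‖ := by
  have hL : ∀ n : ℤ, L n = (n : ℝ) • L 1 := fun n => by
    rw [L.apply_int, Int.cast_smul_eq_zsmul]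
  rw [hL] at ha hb ⊢
  exact norm_sub_smul_eq_of_eq_of_eq (Int.cast_injective.ne hab) ha hb γ

end InnerProductSpace

theorem norm_sub_add_map_neg {E : Type*} [SeminormedAddCommGroup E] (L : ℤ →+ E)
    (x y : E) (γ : ℤ) : ‖y - (x + L γ)‖ = ‖x - (y + L (-γ))‖ := by
  rw [← norm_neg, map_neg]
  congr 1
  abel

theorem two_orbit_rank_one_globally_rigid_general
    {ε : Type*} (ψ : ε → ℤ)
    (L : ℤ →+ EuclideanSpace ℝ (Fin 2))
    (p : Bool → EuclideanSpace ℝ (Fin 2))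
    (e₁ e₂ : ε) (hlabels : ψ e₁ ≠ ψ e₂) :
    ∀ q : Bool → EuclideanSpace ℝ (Fin 2),
      (∀ e : ε, ‖q true - (q false + L (ψ e))‖ = ‖p true - (p false + L (ψ e))‖) →
      ∀ w w' : Bool, ∀ γ : ℤ,
        ‖q w - (q w' + L γ)‖ = ‖p w - (p w' + L γ)‖ := by
  intro q hq
  have hcross : ∀ γ : ℤ, ‖q true - (q false + L γ)‖ = ‖p true - (p false + L γ)‖ := by
    simp only [sub_add_eq_sub_sub] at hq ⊢
    exact norm_sub_map_eq_of_eq_of_eq L hlabels (hq e₁) (hq e₂)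
  intro w w' γ
  cases w <;> cases w'
  · simp only [sub_add_cancel_left]
  · rw [norm_sub_add_map_neg L (q true), norm_sub_add_map_neg L (p true)]
    exact hcross (-γ)
  · exact hcross γ
  · simp only [sub_add_cancel_left]

/-- Lemma rem:2orbits, case `k = 1`, two vertex orbits.
Let `(G, ψ, p)` be a generic `Γ`-labeled framework in `ℝ²` with `Γ ≅ ℤ` (rank one),
two vertices `u = true`, `v = false`, all edges directed from `u` to `v`, and
`L : ℤ → ℝ²` a nonsingular (rational-valued) homomorphism. If two edges carry distinct
labels, then `(G, ψ, p)` is `L`-periodically globally rigid: any `q` with the same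
edge lengths has the same complete labeled distance data as `p`. -/
theorem two_orbit_rank_one_globally_rigid
    {ε : Type*} (ψ : ε → ℤ)
    (L : ℤ →+ EuclideanSpace ℝ (Fin 2))
    (hLns : L 1 ≠ 0)
    (hLrat : ∀ i : Fin 2, ∃ a : ℚ, L 1 i = (a : ℝ))
    (p : Bool → EuclideanSpace ℝ (Fin 2))
    (hgen : AlgebraicIndependent ℚ (fun x : Bool × Fin 2 => p x.1 x.2))
    (e₁ e₂ : ε) (hlabels : ψ e₁ ≠ ψ e₂) :
    ∀ q : Bool → EuclideanSpace ℝ (Fin 2),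
      (∀ e : ε, ‖q true - (q false + L (ψ e))‖ = ‖p true - (p false + L (ψ e))‖) →
      ∀ w w' : Bool, ∀ γ : ℤ,
        ‖q w - (q w' + L γ)‖ = ‖p w - (p w' + L γ)‖ :=
  two_orbit_rank_one_globally_rigid_general ψ L p e₁ e₂ hlabels
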